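/- Suppose each ∇f_j is Lipschitz continuous with constant L, d(x) is the unique global minimizer of d ↦ Q(x,d), and t(x) = Q(x,d(x)). Then for every α ∈ [0,1] and every j = 1,…,m, F_j(x + α d(x)) − F_j(x) ≤ α t(x) + (L/2) α² ‖d(x)‖². -/

import Mathlib

open Filter Topology Finset
open scoped RealInnerProductSpace

noncomputable section

/-- One-sided directional derivative: `c = F'(x; d) = lim_{α→0⁺} (F(x+αd) − F(x))/α`. -/
def HasDirDeriv {n : ℕ} (F : EuclideanSpace ℝ (Fin n) → ℝ)
    (x d : EuclideanSpace ℝ (Fin n)) (c : ℝ) : Prop :=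
  Filter.Tendsto (fun α : ℝ => (F (x + α • d) - F x) / α) (nhdsWithin 0 (Set.Ioi 0)) (nhds c)

/-- Subdifferential of a convex function: `∂h(x) = {ξ : h(y) ≥ h(x) + ⟪ξ, y − x⟫ ∀ y}`. -/
def subdiff {n : ℕ} (h : EuclideanSpace ℝ (Fin n) → ℝ) (x : EuclideanSpace ℝ (Fin n)) :
    Set (EuclideanSpace ℝ (Fin n)) :=
  {ξ | ∀ y, h x + ⟪ξ, y - x⟫ ≤ h y}

/-- `Q_j(x,d) = ∇f_j(x)ᵀd + ½ dᵀ∇²f_j(x)d + g_j(x+d) − g_j(x)`, where the Hessian is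
the Fréchet derivative of the gradient. -/
def Qj {n m : ℕ} (f g : Fin (m + 1) → EuclideanSpace ℝ (Fin n) → ℝ)
    (j : Fin (m + 1)) (x d : EuclideanSpace ℝ (Fin n)) : ℝ :=
  ⟪gradient (f j) x, d⟫ + (1 / 2) * ⟪(fderiv ℝ (gradient (f j)) x) d, d⟫
    + g j (x + d) - g j x

/-- `Q(x,d) = max_{1 ≤ j ≤ m} Q_j(x,d)`. -/
def Qmax {n m : ℕ} (f g : Fin (m + 1) → EuclideanSpace ℝ (Fin n) → ℝ)
    (x d : EuclideanSpace ℝ (Fin n)) : ℝ :=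
  Finset.univ.sup' Finset.univ_nonempty (fun j => Qj f g j x d)

/-! The classical descent lemma for the smooth part, convexity of `g_j` along the segment
`[x, x + d]`, and dropping the nonnegative Hessian term give
`F_j(x + αd) − F_j(x) ≤ α (⟪∇f_j x, d⟫ + g_j(x + d) − g_j x) + L/2 α² ‖d‖²
  ≤ α Q_j(x, d) + L/2 α² ‖d‖²`, and `Q_j ≤ Q`. -/

section Descent

variable {E : Type*} [NormedAddCommGroup E] [InnerProductSpace ℝ E] [CompleteSpace E]
  {f : E → ℝ} {L : ℝ}

theorem hasDerivAt_comp_add_smul (hf : Differentiable ℝ f) (x d : E) (s : ℝ) :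
    HasDerivAt (fun s : ℝ => f (x + s • d)) ⟪gradient f (x + s • d), d⟫ s := by
  have hline : HasDerivAt (fun s : ℝ => x + s • d) d s := by
    simpa using ((hasDerivAt_id s).smul_const d).const_add x
  exact ((hf _).hasGradientAt.hasFDerivAt.comp_hasDerivAt s hline).congr_deriv
    (by simp)

theorem inner_gradient_add_smul_sub_le
    (hLip : ∀ y z, ‖gradient f y - gradient f z‖ ≤ L * ‖y - z‖)
    (x d : E) {s : ℝ} (hs : 0 ≤ s) :
    ⟪gradient f (x + s • d), d⟫ - ⟪gradient f x, d⟫ ≤ L * s * ‖d‖ ^ 2 := by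
  rw [← inner_sub_left]
  calc ⟪gradient f (x + s • d) - gradient f x, d⟫
      ≤ ‖gradient f (x + s • d) - gradient f x‖ * ‖d‖ := real_inner_le_norm _ _
    _ ≤ L * ‖(x + s • d) - x‖ * ‖d‖ := by gcongr; exact hLip _ _
    _ = L * s * ‖d‖ ^ 2 := by
      rw [add_sub_cancel_left, norm_smul, Real.norm_of_nonneg hs]; ring

theorem le_add_inner_gradient_add_sq (hf : Differentiable ℝ f)
    (hLip : ∀ y z, ‖gradient f y - gradient f z‖ ≤ L * ‖y - z‖)
    (x d : E) {α : ℝ} (hα : 0 ≤ α) :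
    f (x + α • d) ≤ f x + α * ⟪gradient f x, d⟫ + L / 2 * α ^ 2 * ‖d‖ ^ 2 := by
  set c := ⟪gradient f x, d⟫
  let φ : ℝ → ℝ := fun s => f (x + s • d) - (s * c + L / 2 * s ^ 2 * ‖d‖ ^ 2)
  have hφ (s : ℝ) : HasDerivAt φ (⟪gradient f (x + s • d), d⟫ - (c + L * s * ‖d‖ ^ 2)) s := by
    have hquad : HasDerivAt (fun s : ℝ => s * c + L / 2 * s ^ 2 * ‖d‖ ^ 2)
        (c + L * s * ‖d‖ ^ 2) s :=
      (((hasDerivAt_id s).mul_const c).add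
        (((hasDerivAt_pow 2 s).const_mul (L / 2)).mul_const (‖d‖ ^ 2))).congr_deriv (by ring)
    exact (hasDerivAt_comp_add_smul hf x d s).sub hquad
  -- the Lipschitz bound makes `φ' ≤ 0` on `[0, ∞)`
  have hanti : AntitoneOn φ (Set.Ici 0) := by
    refine antitoneOn_of_deriv_nonpos (convex_Ici 0)
      (HasDerivAt.continuousOn fun s _ => hφ s)
      (fun s _ => (hφ s).differentiableAt.differentiableWithinAt) fun s hs => ?_
    rw [interior_Ici] at hs
    rw [(hφ s).deriv]
    linarith [inner_gradient_add_smul_sub_le hLip x d (le_of_lt hs)]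
  have hφα : φ α ≤ φ 0 := hanti Set.self_mem_Ici hα hα
  simp only [φ, zero_smul, add_zero, zero_mul, zero_pow two_ne_zero, mul_zero, sub_zero] at hφα
  linarith

end Descent

theorem ConvexOn.apply_add_smul_sub_le {E : Type*} [AddCommGroup E] [Module ℝ E]
    {g : E → ℝ} (hg : ConvexOn ℝ Set.univ g) (x d : E) {α : ℝ} (hα₀ : 0 ≤ α) (hα₁ : α ≤ 1) :
    g (x + α • d) - g x ≤ α * (g (x + d) - g x) := by
  have hcomb : (1 - α) • x + α • (x + d) = x + α • d := by
    rw [smul_add, sub_smul, one_smul]; abel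
  have := hg.2 (Set.mem_univ x) (Set.mem_univ (x + d)) (sub_nonneg.2 hα₁) hα₀ (sub_add_cancel 1 α)
  rw [hcomb, smul_eq_mul, smul_eq_mul] at this
  linarith

theorem Qj_le_Qmax {n m : ℕ} (f g : Fin (m + 1) → EuclideanSpace ℝ (Fin n) → ℝ)
    (j : Fin (m + 1)) (x d : EuclideanSpace ℝ (Fin n)) : Qj f g j x d ≤ Qmax f g x d :=
  Finset.le_sup' (fun j => Qj f g j x d) (mem_univ j)

theorem inner_gradient_add_sub_le_Qj {n m : ℕ} (f g : Fin (m + 1) → EuclideanSpace ℝ (Fin n) → ℝ)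
    (j : Fin (m + 1)) (x d : EuclideanSpace ℝ (Fin n))
    (hpsd : 0 ≤ ⟪(fderiv ℝ (gradient (f j)) x) d, d⟫) :
    ⟪gradient (f j) x, d⟫ + (g j (x + d) - g j x) ≤ Qj f g j x d := by
  rw [Qj]; linarith

theorem descent_estimate_lipschitz_general {n m : ℕ} (L : ℝ)
    (f g : Fin (m + 1) → EuclideanSpace ℝ (Fin n) → ℝ)
    (hfC2 : ∀ j, ContDiff ℝ 2 (f j))
    (hfpsd : ∀ j (y d : EuclideanSpace ℝ (Fin n)),
      0 ≤ ⟪(fderiv ℝ (gradient (f j)) y) d, d⟫)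
    (hLip : ∀ j (y z : EuclideanSpace ℝ (Fin n)),
      ‖gradient (f j) y - gradient (f j) z‖ ≤ L * ‖y - z‖)
    (hgconv : ∀ j, ConvexOn ℝ Set.univ (g j))
    (x dx : EuclideanSpace ℝ (Fin n)) (t : ℝ)
    (ht : t = Qmax f g x dx) :
    ∀ α : ℝ, 0 ≤ α → α ≤ 1 → ∀ j,
      (f j (x + α • dx) + g j (x + α • dx)) - (f j x + g j x)
        ≤ α * t + L / 2 * α ^ 2 * ‖dx‖ ^ 2 := by
  intro α hα₀ hα₁ j
  have hf := le_add_inner_gradient_add_sq ((hfC2 j).differentiable two_ne_zero) (hLip j) x dx hα₀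
  have hg := (hgconv j).apply_add_smul_sub_le x dx hα₀ hα₁
  have hQ : ⟪gradient (f j) x, dx⟫ + (g j (x + dx) - g j x) ≤ t :=
    ht ▸ (inner_gradient_add_sub_le_Qj f g j x dx (hfpsd j x dx)).trans (Qj_le_Qmax f g j x dx)
  nlinarith [mul_le_mul_of_nonneg_left hQ hα₀]

/-- if each `∇f_j` is Lipschitz with constant `L` (and Hessians are positive
semidefinite), `d(x)` is the unique global minimizer of `d ↦ Q(x,d)` and `t(x) = Q(x,d(x))`,
then for every `α ∈ [0,1]` and every `j`,
`F_j(x + α d(x)) − F_j(x) ≤ α t(x) + (L/2) α² ‖d(x)‖²`, where `F_j = f_j + g_j`. -/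
theorem descent_estimate_lipschitz {n m : ℕ} (L : ℝ) (hL : 0 < L)
    (f g : Fin (m + 1) → EuclideanSpace ℝ (Fin n) → ℝ)
    (hfconv : ∀ j, ConvexOn ℝ Set.univ (f j))
    (hfC2 : ∀ j, ContDiff ℝ 2 (f j))
    (hfpsd : ∀ j (y d : EuclideanSpace ℝ (Fin n)),
      0 ≤ ⟪(fderiv ℝ (gradient (f j)) y) d, d⟫)
    (hLip : ∀ j (y z : EuclideanSpace ℝ (Fin n)),
      ‖gradient (f j) y - gradient (f j) z‖ ≤ L * ‖y - z‖)
    (hgconv : ∀ j, ConvexOn ℝ Set.univ (g j))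
    (hgcont : ∀ j, Continuous (g j))
    (x dx : EuclideanSpace ℝ (Fin n)) (t : ℝ)
    (hmin : ∀ d, Qmax f g x dx ≤ Qmax f g x d)
    (huniq : ∀ d, (∀ d', Qmax f g x d ≤ Qmax f g x d') → d = dx)
    (ht : t = Qmax f g x dx) :
    ∀ α : ℝ, 0 ≤ α → α ≤ 1 → ∀ j,
      (f j (x + α • dx) + g j (x + α • dx)) - (f j x + g j x)
        ≤ α * t + L / 2 * α ^ 2 * ‖dx‖ ^ 2 :=
  descent_estimate_lipschitz_general L f g hfC2 hfpsd hLip hgconv x dx t ht
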